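/- arXiv:math/0608609 — 4 statements merged into one kernel-verified Lean document; each statement's English description precedes it below -/
import Mathlib

section
/- A separated bornological algebra A is locally multiplicative if and only if ρ(S) < ∞ for every small subset S ⊂ A, and A is analytically nilpotent if and only if ρ(S) = 0 for every small subset S ⊂ A. -/
/-!
Separatedness makes multiplication bilinear: for an additive map `f` preserving small sets, the
line through `f (r • v) - r • f v` is small, so this vector vanishes. A small multiplicatively
closed disk `T ⊇ l⁻¹ • S` then contains `(l⁻¹ • S)^∞`, so `ρ(S) ≤ l`; conversely, for `t > ρ(S)`
the absolutely convex hull of `(t⁻¹ • S)^∞` is a small multiplicatively closed disk absorbing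
`S`. If `A` is analytically nilpotent, `(ε⁻¹ • S)^∞` is small for every `ε > 0`; conversely,
`ρ(S) < t < 1` puts `S^∞ = (t • t⁻¹ • S)^∞` inside the balanced hull of the small set
`(t⁻¹ • S)^∞`.
-/

open Bornology Set
open scoped ENNReal Pointwise

/-- `setPow S n` is the set of `(n+1)`-fold products of elements of `S`. -/
def setPow {A : Type} [Mul A] (S : Set A) : ℕ → Set A
  | 0 => S
  | n + 1 => setPow S n * S

/-- The multiplicative closure `S^∞ = ⋃_{n ≥ 1} S^n`. -/
def mulClosure {A : Type} [Mul A] (S : Set A) : Set A := ⋃ n, setPow S n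

/-- The spectral radius `ρ(S; A)`. -/
noncomputable def specRad (A : Type) [Mul A] [SMul ℝ A] [Bornology A] (S : Set A) : ℝ≥0∞ :=
  sInf {r : ℝ≥0∞ | ∃ t : ℝ, 0 < t ∧ r = ENNReal.ofReal t ∧
    Bornology.IsBounded (mulClosure (t⁻¹ • S))}

/-- A bornological vector space is separated if the only bounded linear subspace is `0`. -/
def SeparatedBorn (A : Type) [AddCommGroup A] [Module ℝ A] [Bornology A] : Prop :=
  ∀ W : Submodule ℝ A, Bornology.IsBounded (W : Set A) → W = ⊥

/-- A disk: an absolutely convex (balanced and convex) subset. -/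
def IsDisk {A : Type} [AddCommGroup A] [Module ℝ A] (S : Set A) : Prop :=
  Balanced ℝ S ∧ Convex ℝ S

/-- A separated bornological algebra is locally multiplicative if every small subset is
absorbed by a small multiplicatively closed disk. -/
def LocallyMultiplicative (A : Type) [NonUnitalRing A] [Module ℝ A] [Bornology A] : Prop :=
  ∀ S : Set A, IsBounded S → ∃ (l : ℝ) (T : Set A),
    0 < l ∧ IsBounded T ∧ IsDisk T ∧ T * T ⊆ T ∧ S ⊆ l • T

/-- A separated bornological algebra is analytically nilpotent if `S^∞` is small for
every small `S`. -/
def AnalyticallyNilpotent (A : Type) [NonUnitalRing A] [Module ℝ A] [Bornology A] : Prop :=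
  ∀ S : Set A, IsBounded S → IsBounded (mulClosure S)

section BoundedSets

variable {A : Type} [AddCommGroup A] [Module ℝ A] [Bornology A]

lemma isBounded_balancedHull_of_hull
    (hhull : ∀ S : Set A, IsBounded S → IsBounded (convexHull ℝ (balancedHull ℝ S)))
    {S : Set A} (hS : IsBounded S) : IsBounded (balancedHull ℝ S) :=
  (hhull S hS).subset (subset_convexHull ℝ _)

lemma isBounded_add_of_hull (hsm : ∀ (r : ℝ) (S : Set A), IsBounded S → IsBounded (r • S))
    (hhull : ∀ S : Set A, IsBounded S → IsBounded (convexHull ℝ (balancedHull ℝ S)))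
    {S T : Set A} (hS : IsBounded S) (hT : IsBounded T) : IsBounded (S + T) := by
  set C := convexHull ℝ (balancedHull ℝ (S ∪ T))
  have hsub : ∀ x ∈ S ∪ T, x ∈ C := fun x hx =>
    subset_convexHull ℝ _ (subset_balancedHull (𝕜 := ℝ) hx)
  refine (hsm 2 C (hhull _ (hS.union hT))).subset ?_
  rintro _ ⟨a, ha, b, hb, rfl⟩
  have hmid : (2 : ℝ)⁻¹ • a + (2 : ℝ)⁻¹ • b ∈ C :=
    convex_convexHull ℝ _ (hsub a (.inl ha)) (hsub b (.inr hb)) (by norm_num) (by norm_num)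
      (by norm_num)
  refine ⟨_, hmid, ?_⟩
  simp only [smul_add, smul_inv_smul₀ (two_ne_zero' ℝ)]

/-- The defect `s ↦ f (s • v) - s • f v` is additive in `s` and vanishes on `ℤ`, so it only
takes the values it takes on `[0, 1)`. -/
lemma isBounded_range_map_smul_sub_smul
    (hsm : ∀ (r : ℝ) (S : Set A), IsBounded S → IsBounded (r • S))
    (hhull : ∀ S : Set A, IsBounded S → IsBounded (convexHull ℝ (balancedHull ℝ S)))
    (f : A →+ A) (hf : ∀ S : Set A, IsBounded S → IsBounded (f '' S)) (v : A) :
    IsBounded (range fun s : ℝ => f (s • v) - s • f v) := by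
  let g : ℝ →+ A := AddMonoidHom.mk' (fun s => f (s • v) - s • f v) fun a b => by
    simp only [add_smul, map_add]
    abel
  have hg_int : ∀ n : ℤ, g n = 0 := fun n => by
    simpa [g] using map_zsmul g n 1
  have hg_fract : ∀ s : ℝ, g s = g (Int.fract s) := fun s => by
    conv_lhs => rw [← Int.fract_add_floor s]
    rw [map_add, hg_int, add_zero]
  have hB : IsBounded (f '' balancedHull ℝ {v} + balancedHull ℝ {f v}) :=
    isBounded_add_of_hull hsm hhull
      (hf _ (isBounded_balancedHull_of_hull hhull isBounded_singleton))
      (isBounded_balancedHull_of_hull hhull isBounded_singleton)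
  refine hB.subset ?_
  rintro _ ⟨s, rfl⟩
  change g s ∈ _
  rw [hg_fract s]
  have h01 : ‖Int.fract s‖ ≤ 1 := by
    rw [Real.norm_of_nonneg (Int.fract_nonneg s)]
    exact (Int.fract_lt_one s).le
  refine ⟨f (Int.fract s • v), ⟨Int.fract s • v, ?_, rfl⟩, -(Int.fract s • f v), ?_, ?_⟩
  · exact mem_balancedHull_iff.2 ⟨Int.fract s, h01, v, rfl, rfl⟩
  · rw [← neg_smul]
    exact mem_balancedHull_iff.2 ⟨-Int.fract s, by rwa [norm_neg], f v, rfl, rfl⟩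
  · exact (sub_eq_add_neg _ _).symm

/-- With `d = f (r • v) - r • f v`, each `s • d` is a sum of two values of the defects at `v` and
at `r • v`, so the line through `d` is bounded. -/
lemma map_smul_of_separated (hsep : SeparatedBorn A)
    (hsm : ∀ (r : ℝ) (S : Set A), IsBounded S → IsBounded (r • S))
    (hhull : ∀ S : Set A, IsBounded S → IsBounded (convexHull ℝ (balancedHull ℝ S)))
    (f : A →+ A) (hf : ∀ S : Set A, IsBounded S → IsBounded (f '' S)) (r : ℝ) (v : A) :
    f (r • v) = r • f v := by
  set d := f (r • v) - r • f v
  have hline : IsBounded ((ℝ ∙ d : Submodule ℝ A) : Set A) := by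
    refine (isBounded_add_of_hull hsm hhull
      (isBounded_range_map_smul_sub_smul hsm hhull f hf v)
      (isBounded_range_map_smul_sub_smul hsm hhull f hf (r • v))).subset ?_
    intro _ hz
    obtain ⟨s, rfl⟩ := Submodule.mem_span_singleton.1 hz
    refine ⟨_, ⟨s * r, rfl⟩, _, ⟨-s, rfl⟩, ?_⟩
    simp only [d, mul_smul, neg_smul, map_neg, smul_sub]
    abel
  have hd : d ∈ (ℝ ∙ d : Submodule ℝ A) := Submodule.mem_span_singleton_self d
  rwa [hsep _ hline, Submodule.mem_bot, sub_eq_zero] at hd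

end BoundedSets

section BilinearMultiplication

variable {A : Type} [NonUnitalRing A] [Module ℝ A] [Bornology A]

lemma isScalarTower_of_separated (hsep : SeparatedBorn A)
    (hmul : ∀ S T : Set A, IsBounded S → IsBounded T → IsBounded (S * T))
    (hsm : ∀ (r : ℝ) (S : Set A), IsBounded S → IsBounded (r • S))
    (hhull : ∀ S : Set A, IsBounded S → IsBounded (convexHull ℝ (balancedHull ℝ S))) :
    IsScalarTower ℝ A A where
  smul_assoc r x y := by
    refine map_smul_of_separated hsep hsm hhull (AddMonoidHom.mulRight y) (fun S hS => ?_) r x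
    rw [AddMonoidHom.coe_mulRight, ← mul_singleton]
    exact hmul S {y} hS isBounded_singleton

lemma smulCommClass_of_separated (hsep : SeparatedBorn A)
    (hmul : ∀ S T : Set A, IsBounded S → IsBounded T → IsBounded (S * T))
    (hsm : ∀ (r : ℝ) (S : Set A), IsBounded S → IsBounded (r • S))
    (hhull : ∀ S : Set A, IsBounded S → IsBounded (convexHull ℝ (balancedHull ℝ S))) :
    SMulCommClass ℝ A A where
  smul_comm r x y := by
    refine (map_smul_of_separated hsep hsm hhull (AddMonoidHom.mulLeft x) (fun S hS => ?_) r
      y).symm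
    rw [AddMonoidHom.coe_mulLeft, ← singleton_mul]
    exact hmul {x} S isBounded_singleton hS

end BilinearMultiplication

section MulClosure

variable {A : Type}

lemma setPow_mono [Mul A] {S T : Set A} (h : S ⊆ T) : ∀ n, setPow S n ⊆ setPow T n
  | 0 => h
  | n + 1 => mul_subset_mul (setPow_mono h n) h

lemma setPow_subset_of_mul_subset [Mul A] {T : Set A} (hT : T * T ⊆ T) : ∀ n, setPow T n ⊆ T
  | 0 => subset_rfl
  | n + 1 => (mul_subset_mul_right (setPow_subset_of_mul_subset hT n)).trans hT

lemma mulClosure_subset_of_mul_subset [Mul A] {S T : Set A} (hST : S ⊆ T) (hT : T * T ⊆ T) :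
    mulClosure S ⊆ T :=
  iUnion_subset fun n => (setPow_mono hST n).trans (setPow_subset_of_mul_subset hT n)

lemma setPow_mul_setPow_subset [Semigroup A] (S : Set A) :
    ∀ m n, setPow S m * setPow S n ⊆ setPow S (m + n + 1)
  | _, 0 => subset_rfl
  | m, n + 1 => by
    rw [setPow, ← mul_assoc]
    exact mul_subset_mul_right (setPow_mul_setPow_subset S m n)

lemma mulClosure_mul_subset [Semigroup A] (S : Set A) :
    mulClosure S * mulClosure S ⊆ mulClosure S := by
  rintro _ ⟨a, ha, b, hb, rfl⟩
  obtain ⟨m, ha⟩ := mem_iUnion.1 ha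
  obtain ⟨n, hb⟩ := mem_iUnion.1 hb
  exact mem_iUnion.2 ⟨m + n + 1, setPow_mul_setPow_subset S m n (mul_mem_mul ha hb)⟩

lemma subset_mulClosure [Mul A] (S : Set A) : S ⊆ mulClosure S :=
  subset_iUnion (setPow S) 0

lemma smul_set_mul_smul_set {𝕜 : Type*} [Monoid 𝕜] [Mul A] [MulAction 𝕜 A]
    [IsScalarTower 𝕜 A A] [SMulCommClass 𝕜 A A] (a b : 𝕜) (S T : Set A) :
    (a • S) * (b • T) = (a * b) • (S * T) := by
  simp only [← image_smul, ← image2_mul, image2_image_left, image2_image_right, image_image2,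
    smul_mul_smul_comm]

lemma setPow_smul {𝕜 : Type*} [Monoid 𝕜] [Mul A] [MulAction 𝕜 A] [IsScalarTower 𝕜 A A]
    [SMulCommClass 𝕜 A A] (a : 𝕜) (S : Set A) :
    ∀ n, setPow (a • S) n = a ^ (n + 1) • setPow S n
  | 0 => by rw [pow_one]; rfl
  | n + 1 => by
    rw [setPow, setPow, setPow_smul a S n, smul_set_mul_smul_set, ← pow_succ]

lemma mulClosure_smul_subset_balancedHull {𝕜 : Type*} [NormedField 𝕜] [Mul A] [MulAction 𝕜 A]
    [IsScalarTower 𝕜 A A] [SMulCommClass 𝕜 A A] {a : 𝕜} (ha : ‖a‖ ≤ 1) (S : Set A) :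
    mulClosure (a • S) ⊆ balancedHull 𝕜 (mulClosure S) := by
  refine iUnion_subset fun n => ?_
  rw [setPow_smul]
  rintro _ ⟨x, hx, rfl⟩
  refine mem_balancedHull_iff.2 ⟨a ^ (n + 1), ?_, smul_mem_smul_set (subset_iUnion _ n hx)⟩
  rw [norm_pow]
  exact pow_le_one₀ (norm_nonneg a) ha

lemma balancedHull_mul_subset {𝕜 : Type*} [NormedField 𝕜] [Mul A] [MulAction 𝕜 A]
    [IsScalarTower 𝕜 A A] [SMulCommClass 𝕜 A A] {S : Set A} (hS : S * S ⊆ S) :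
    balancedHull 𝕜 S * balancedHull 𝕜 S ⊆ balancedHull 𝕜 S := by
  rintro _ ⟨_, hx, _, hy, rfl⟩
  obtain ⟨r, hr, a, ha, rfl⟩ := mem_balancedHull_iff.1 hx
  obtain ⟨u, hu, b, hb, rfl⟩ := mem_balancedHull_iff.1 hy
  refine mem_balancedHull_iff.2 ⟨r * u, ?_, ?_⟩
  · rw [norm_mul]
    exact mul_le_one₀ hr (norm_nonneg u) hu
  · change (r • a) * (u • b) ∈ _
    rw [smul_mul_smul_comm]
    exact smul_mem_smul_set (hS (mul_mem_mul ha hb))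

lemma convexHull_mul_subset {𝕜 : Type*} [CommSemiring 𝕜] [PartialOrder 𝕜]
    [NonUnitalNonAssocSemiring A] [Module 𝕜 A] [IsScalarTower 𝕜 A A] [SMulCommClass 𝕜 A A]
    {S : Set A} (hS : S * S ⊆ S) :
    convexHull 𝕜 S * convexHull 𝕜 S ⊆ convexHull 𝕜 S := by
  rintro _ ⟨a, ha, b, hb, rfl⟩
  have hS_mul : ∀ s ∈ S, s * b ∈ convexHull 𝕜 S := fun s hs =>
    convexHull_min (t := LinearMap.mulLeft 𝕜 s ⁻¹' convexHull 𝕜 S)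
      (fun t ht => subset_convexHull 𝕜 S (hS (mul_mem_mul hs ht)))
      ((convex_convexHull 𝕜 S).linear_preimage _) hb
  exact convexHull_min (t := LinearMap.mulRight 𝕜 b ⁻¹' convexHull 𝕜 S) hS_mul
    ((convex_convexHull 𝕜 S).linear_preimage _) ha

end MulClosure

section SpectralRadius

variable {A : Type}

lemma specRad_le_ofReal [Mul A] [SMul ℝ A] [Bornology A] {S : Set A} {t : ℝ} (ht : 0 < t)
    (hS : IsBounded (mulClosure (t⁻¹ • S))) : specRad A S ≤ ENNReal.ofReal t :=
  sInf_le ⟨t, ht, rfl, hS⟩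

lemma exists_isBounded_mulClosure_of_specRad_lt [Mul A] [SMul ℝ A] [Bornology A] {S : Set A}
    {b : ℝ≥0∞} (h : specRad A S < b) :
    ∃ t : ℝ, 0 < t ∧ ENNReal.ofReal t < b ∧ IsBounded (mulClosure (t⁻¹ • S)) := by
  obtain ⟨_, ⟨t, ht, rfl, hS⟩, htb⟩ := sInf_lt_iff.1 h
  exact ⟨t, ht, htb, hS⟩

variable [NonUnitalRing A] [Module ℝ A] [Bornology A]

lemma LocallyMultiplicative.specRad_lt_top (h : LocallyMultiplicative A) {S : Set A}
    (hS : IsBounded S) : specRad A S < ⊤ := by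
  obtain ⟨l, T, hl, hT, -, hTT, hST⟩ := h S hS
  have hclosure : mulClosure (l⁻¹ • S) ⊆ T :=
    mulClosure_subset_of_mul_subset ((subset_smul_set_iff₀ hl.ne').1 hST) hTT
  exact (specRad_le_ofReal hl (hT.subset hclosure)).trans_lt ENNReal.ofReal_lt_top

lemma locallyMultiplicative_of_specRad_lt_top [IsScalarTower ℝ A A] [SMulCommClass ℝ A A]
    (hhull : ∀ S : Set A, IsBounded S → IsBounded (convexHull ℝ (balancedHull ℝ S)))
    (h : ∀ S : Set A, IsBounded S → specRad A S < ⊤) : LocallyMultiplicative A := by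
  intro S hS
  obtain ⟨t, ht, -, hbdd⟩ := exists_isBounded_mulClosure_of_specRad_lt (h S hS)
  refine ⟨t, convexHull ℝ (balancedHull ℝ (mulClosure (t⁻¹ • S))), ht, hhull _ hbdd,
    ⟨(balancedHull.balanced _).convexHull, convex_convexHull ℝ _⟩,
    convexHull_mul_subset (balancedHull_mul_subset (mulClosure_mul_subset _)), ?_⟩
  exact (subset_smul_set_iff₀ ht.ne').2 <| (subset_mulClosure _).trans <|
    (subset_balancedHull ℝ).trans (subset_convexHull ℝ _)

lemma AnalyticallyNilpotent.specRad_eq_zero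
    (hsm : ∀ (r : ℝ) (S : Set A), IsBounded S → IsBounded (r • S))
    (h : AnalyticallyNilpotent A) {S : Set A} (hS : IsBounded S) : specRad A S = 0 := by
  refine le_antisymm (ENNReal.le_of_forall_pos_le_add fun ε hε _ => ?_) bot_le
  rw [zero_add, ← ENNReal.ofReal_coe_nnreal]
  exact specRad_le_ofReal (NNReal.coe_pos.2 hε) (h _ (hsm _ _ hS))

lemma analyticallyNilpotent_of_specRad_eq_zero [IsScalarTower ℝ A A] [SMulCommClass ℝ A A]
    (hhull : ∀ S : Set A, IsBounded S → IsBounded (convexHull ℝ (balancedHull ℝ S)))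
    (h : ∀ S : Set A, IsBounded S → specRad A S = 0) : AnalyticallyNilpotent A := by
  intro S hS
  obtain ⟨t, ht, ht_lt_one, hbdd⟩ :=
    exists_isBounded_mulClosure_of_specRad_lt ((h S hS).trans_lt zero_lt_one)
  have ht_norm : ‖t‖ ≤ 1 := by
    rw [Real.norm_of_nonneg ht.le]
    exact (ENNReal.ofReal_lt_one.1 ht_lt_one).le
  refine (isBounded_balancedHull_of_hull hhull hbdd).subset ?_
  simpa only [smul_inv_smul₀ ht.ne'] using mulClosure_smul_subset_balancedHull ht_norm (t⁻¹ • S)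

end SpectralRadius

theorem stmt2 {A : Type} [NonUnitalRing A] [Module ℝ A] [Bornology A]
    (hsep : SeparatedBorn A)
    (hmul : ∀ S T : Set A, IsBounded S → IsBounded T → IsBounded (S * T))
    (hsm : ∀ (r : ℝ) (S : Set A), IsBounded S → IsBounded (r • S))
    (hhull : ∀ S : Set A, IsBounded S → IsBounded (convexHull ℝ (balancedHull ℝ S))) :
    (LocallyMultiplicative A ↔ ∀ S : Set A, IsBounded S → specRad A S < ⊤) ∧
    (AnalyticallyNilpotent A ↔ ∀ S : Set A, IsBounded S → specRad A S = 0) := by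
  have : IsScalarTower ℝ A A := isScalarTower_of_separated hsep hmul hsm hhull
  have : SMulCommClass ℝ A A := smulCommClass_of_separated hsep hmul hsm hhull
  exact ⟨⟨fun h _ => h.specRad_lt_top, locallyMultiplicative_of_specRad_lt_top hhull⟩,
    ⟨fun h _ => h.specRad_eq_zero hsm, analyticallyNilpotent_of_specRad_eq_zero hhull⟩⟩
end

section
/- A separated (complete) bornological algebra is locally multiplicative if and only if it is a direct limit of (complete) normed algebras. -/
/-!
For a small multiplicatively closed disk `T`, the gauge of `T` is a submultiplicative norm on the
subalgebra `A_T = ⋃_{r > 0} r • T`: subadditivity and homogeneity hold because `T` is a disk,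
submultiplicativity because `T * T ⊆ T`, and definiteness because `A` is separated, a point of
gauge zero spanning a line inside the small set `T`. Local multiplicativity says exactly that these
disks, ordered by absorption, form a directed family whose subalgebras cover `A`, and that a set is
small iff it is gauge-bounded in some `A_T`. Conversely, the closed unit balls of the normed pieces
of a direct limit are small multiplicatively closed disks absorbing every small set.
-/

open Bornology Set
open scoped ENNReal Pointwise

/-- `A` is a direct limit of normed algebras: there is a directed family of
subalgebras `Sa i`, each equipped with a (submultiplicative, homogeneous) norm `ν i`,
whose union is `A`, such that the inclusions are bounded and the bornology of `A` is
exactly the inductive limit bornology (a set is small iff it is a norm-bounded subset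
of some `Sa i`). -/
def IsDirectLimitOfNormedAlgebras (A : Type) [NonUnitalRing A] [Module ℝ A]
    [IsScalarTower ℝ A A] [SMulCommClass ℝ A A] [Bornology A] : Prop :=
  ∃ (ι : Type) (le : ι → ι → Prop), Nonempty ι ∧
    (∀ i, le i i) ∧ (∀ i j k, le i j → le j k → le i k) ∧
    (∀ i j, ∃ k, le i k ∧ le j k) ∧
    ∃ (Sa : ι → NonUnitalSubalgebra ℝ A) (ν : ι → A → ℝ),
      -- directed increasing family of subalgebras covering A
      (∀ i j, le i j → Sa i ≤ Sa j) ∧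
      (∀ x : A, ∃ i, x ∈ Sa i) ∧
      -- each ν i is a norm on Sa i
      (∀ i, ∀ x ∈ Sa i, 0 ≤ ν i x) ∧
      (∀ i, ∀ x ∈ Sa i, (ν i x = 0 ↔ x = 0)) ∧
      (∀ i, ∀ x ∈ Sa i, ∀ y ∈ Sa i, ν i (x + y) ≤ ν i x + ν i y) ∧
      (∀ i, ∀ (r : ℝ), ∀ x ∈ Sa i, ν i (r • x) = |r| * ν i x) ∧
      -- submultiplicativity: each piece is a normed algebra
      (∀ i, ∀ x ∈ Sa i, ∀ y ∈ Sa i, ν i (x * y) ≤ ν i x * ν i y) ∧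
      -- the structure maps (inclusions) are bounded
      (∀ i j, le i j → ∃ C : ℝ, 0 < C ∧ ∀ x ∈ Sa i, ν j x ≤ C * ν i x) ∧
      -- the bornology of A is the direct limit bornology
      (∀ U : Set A, IsBounded U ↔ ∃ (i : ι) (C : ℝ),
        U ⊆ {x | x ∈ Sa i ∧ ν i x ≤ C})

section Gauge

variable {E : Type*} [AddCommGroup E] [Module ℝ E] {s t : Set E} {x y : E} {a l : ℝ}

theorem exists_lt_of_gauge_lt_of_mem_smul (hx : ∃ r : ℝ, 0 < r ∧ x ∈ r • s) (h : gauge s x < a) :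
    ∃ b, 0 < b ∧ b < a ∧ x ∈ b • s := by
  obtain ⟨b, ⟨hb, hxb⟩, hba⟩ := exists_lt_of_csInf_lt hx h
  exact ⟨b, hb, hba, hxb⟩

theorem Balanced.mem_smul_of_gauge_lt (hs : Balanced ℝ s) (hx : ∃ r : ℝ, 0 < r ∧ x ∈ r • s)
    (h : gauge s x < a) : x ∈ a • s := by
  obtain ⟨b, hb, hba, hxb⟩ := exists_lt_of_gauge_lt_of_mem_smul hx h
  refine hs.smul_mono ?_ hxb
  rw [Real.norm_of_nonneg hb.le, Real.norm_of_nonneg (hb.trans hba).le]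
  exact hba.le

theorem gauge_add_le_of_mem_smul (hs : Convex ℝ s) (hx : ∃ r : ℝ, 0 < r ∧ x ∈ r • s)
    (hy : ∃ r : ℝ, 0 < r ∧ y ∈ r • s) : gauge s (x + y) ≤ gauge s x + gauge s y := by
  refine le_of_forall_pos_lt_add fun ε hε => ?_
  obtain ⟨a, ha, ha', hxa⟩ :=
    exists_lt_of_gauge_lt_of_mem_smul hx (lt_add_of_pos_right (gauge s x) (half_pos hε))
  obtain ⟨b, hb, hb', hyb⟩ :=
    exists_lt_of_gauge_lt_of_mem_smul hy (lt_add_of_pos_right (gauge s y) (half_pos hε))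
  calc
    gauge s (x + y) ≤ a + b := gauge_le_of_mem (by positivity) <| by
      rw [hs.add_smul ha.le hb.le]
      exact add_mem_add hxa hyb
    _ < gauge s x + gauge s y + ε := by linarith

theorem Balanced.gauge_le_mul_of_subset_smul (hs : Balanced ℝ s) (hl : 0 ≤ l) (hst : s ⊆ l • t)
    (hx : ∃ r : ℝ, 0 < r ∧ x ∈ r • s) : gauge t x ≤ l * gauge s x := by
  refine le_mul_of_forall_lt₀ fun l' hl' a ha => ?_
  have ha₀ : 0 < a := (gauge_nonneg x).trans_lt ha
  have hxt : x ∈ (a * l) • t := by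
    rw [mul_smul]
    exact smul_set_mono hst (hs.mem_smul_of_gauge_lt hx ha)
  calc gauge t x ≤ a * l := gauge_le_of_mem (by positivity) hxt
    _ ≤ l' * a := by rw [mul_comm]; gcongr

theorem Balanced.smul_mem_of_gauge_eq_zero (hs : Balanced ℝ s) (hx : ∃ r : ℝ, 0 < r ∧ x ∈ r • s)
    (h : gauge s x = 0) (c : ℝ) : c • x ∈ s := by
  have hpos : 0 < |c| + 1 := by positivity
  have hcx : (|c| + 1) • x ∈ s := by
    have := hs.mem_smul_of_gauge_lt hx (a := (|c| + 1)⁻¹) (h ▸ inv_pos.2 hpos)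
    rwa [mem_smul_set_iff_inv_smul_mem₀ (inv_ne_zero hpos.ne'), inv_inv] at this
  refine hs.smul_mem_mono hcx ?_
  rw [Real.norm_eq_abs, Real.norm_of_nonneg hpos.le]
  linarith

end Gauge

theorem SeparatedBorn.eq_zero_of_gauge_eq_zero {E : Type} [AddCommGroup E] [Module ℝ E]
    [Bornology E] (hsep : SeparatedBorn E) {s : Set E} {x : E} (hsb : IsBounded s)
    (hs : Balanced ℝ s) (hx : ∃ r : ℝ, 0 < r ∧ x ∈ r • s) (h : gauge s x = 0) : x = 0 := by
  have hline : ((ℝ ∙ x : Submodule ℝ E) : Set E) ⊆ s := by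
    rintro _ hy
    obtain ⟨c, rfl⟩ := Submodule.mem_span_singleton.1 hy
    exact hs.smul_mem_of_gauge_eq_zero hx h c
  simpa using (hsep _ (hsb.subset hline)).le (Submodule.mem_span_singleton_self x)

section MulDisk

variable {A : Type} [NonUnitalRing A] [Module ℝ A] [IsScalarTower ℝ A A] [SMulCommClass ℝ A A]
  {T : Set A} {x y : A} {a b : ℝ}

theorem mul_mem_smul_of_mem_smul (hT : T * T ⊆ T) (hx : x ∈ a • T) (hy : y ∈ b • T) :
    x * y ∈ (a * b) • T := by
  obtain ⟨t, ht, rfl⟩ := hx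
  obtain ⟨u, hu, rfl⟩ := hy
  exact ⟨t * u, hT (mul_mem_mul ht hu), (smul_mul_smul_comm a t b u).symm⟩

theorem gauge_mul_le_of_mul_subset (hs : Balanced ℝ T) (hT : T * T ⊆ T)
    (hx : ∃ r : ℝ, 0 < r ∧ x ∈ r • T) (hy : ∃ r : ℝ, 0 < r ∧ y ∈ r • T) :
    gauge T (x * y) ≤ gauge T x * gauge T y :=
  le_mul_of_forall_lt₀ fun _ ha _ hb =>
    gauge_le_of_mem (mul_nonneg ((gauge_nonneg x).trans ha.le) ((gauge_nonneg y).trans hb.le))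
      (mul_mem_smul_of_mem_smul hT (hs.mem_smul_of_gauge_lt hx ha) (hs.mem_smul_of_gauge_lt hy hb))

end MulDisk

structure SmallMulDisk (A : Type) [NonUnitalRing A] [Module ℝ A] [Bornology A] where
  carrier : Set A
  isBounded : IsBounded carrier
  balanced : Balanced ℝ carrier
  convex : Convex ℝ carrier
  mul_subset : carrier * carrier ⊆ carrier
  zero_mem : (0 : A) ∈ carrier

namespace SmallMulDisk

variable {A : Type} [NonUnitalRing A] [Module ℝ A] [Bornology A]

instance : Preorder (SmallMulDisk A) where
  le T T' := ∃ l : ℝ, 0 < l ∧ T.carrier ⊆ l • T'.carrier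
  le_refl T := ⟨1, one_pos, by rw [one_smul]⟩
  le_trans T T' T'' := by
    rintro ⟨l, hl, hTT'⟩ ⟨m, hm, hT'T''⟩
    refine ⟨l * m, mul_pos hl hm, hTT'.trans ?_⟩
    rw [mul_smul]
    exact smul_set_mono hT'T''

theorem _root_.LocallyMultiplicative.exists_subset_smul (h : LocallyMultiplicative A) {S : Set A}
    (hS : IsBounded S) : ∃ (T : SmallMulDisk A) (l : ℝ), 0 < l ∧ S ⊆ l • T.carrier := by
  obtain ⟨l, T, hl, hTb, ⟨hbal, hconv⟩, hmul, hsub⟩ := h (insert 0 S) (hS.insert 0)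
  obtain ⟨t, ht, -⟩ := hsub (mem_insert 0 S)
  exact ⟨⟨T, hTb, hbal, hconv, hmul, hbal.zero_mem ⟨t, ht⟩⟩, l, hl,
    (subset_insert 0 S).trans hsub⟩

theorem exists_ge_ge (h : LocallyMultiplicative A) (T T' : SmallMulDisk A) :
    ∃ U, T ≤ U ∧ T' ≤ U := by
  obtain ⟨U, l, hl, hsub⟩ := h.exists_subset_smul (T.isBounded.union T'.isBounded)
  exact ⟨U, ⟨l, hl, subset_union_left.trans hsub⟩, ⟨l, hl, subset_union_right.trans hsub⟩⟩

variable [IsScalarTower ℝ A A] [SMulCommClass ℝ A A]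

def subalgebra (T : SmallMulDisk A) : NonUnitalSubalgebra ℝ A where
  carrier := {x | ∃ r : ℝ, 0 < r ∧ x ∈ r • T.carrier}
  zero_mem' := ⟨1, one_pos, by rw [one_smul]; exact T.zero_mem⟩
  add_mem' := by
    rintro x y ⟨a, ha, hx⟩ ⟨b, hb, hy⟩
    refine ⟨a + b, add_pos ha hb, ?_⟩
    rw [T.convex.add_smul ha.le hb.le]
    exact add_mem_add hx hy
  mul_mem' := by
    rintro x y ⟨a, ha, hx⟩ ⟨b, hb, hy⟩
    exact ⟨a * b, mul_pos ha hb, mul_mem_smul_of_mem_smul T.mul_subset hx hy⟩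
  smul_mem' := by
    rintro c x ⟨a, ha, hx⟩
    have hcx : c • x ∈ (c * a) • T.carrier := by
      rw [mul_smul]
      exact smul_mem_smul_set hx
    refine ⟨(|c| + 1) * a, by positivity, T.balanced.smul_mono ?_ hcx⟩
    rw [norm_mul, norm_mul, Real.norm_of_nonneg (by positivity : 0 ≤ |c| + 1), Real.norm_eq_abs]
    gcongr
    linarith

theorem subalgebra_mono {T T' : SmallMulDisk A} (hle : T ≤ T') : T.subalgebra ≤ T'.subalgebra := by
  rintro x ⟨a, ha, hx⟩
  obtain ⟨l, hl, hsub⟩ := hle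
  refine ⟨a * l, mul_pos ha hl, ?_⟩
  rw [mul_smul]
  exact smul_set_mono hsub hx

end SmallMulDisk

namespace SmallMulDisk

variable {A : Type} [NonUnitalRing A] [Module ℝ A] [IsScalarTower ℝ A A] [SMulCommClass ℝ A A]
  [Bornology A]

theorem exists_mem_subalgebra (h : LocallyMultiplicative A) (x : A) :
    ∃ T : SmallMulDisk A, x ∈ T.subalgebra := by
  obtain ⟨T, l, hl, hsub⟩ := h.exists_subset_smul isBounded_singleton
  exact ⟨T, l, hl, hsub rfl⟩

theorem gauge_eq_zero_iff (hsep : SeparatedBorn A) {T : SmallMulDisk A} {x : A}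
    (hx : x ∈ T.subalgebra) : gauge T.carrier x = 0 ↔ x = 0 :=
  ⟨hsep.eq_zero_of_gauge_eq_zero T.isBounded T.balanced hx, by rintro rfl; exact gauge_zero⟩

theorem isBounded_iff (h : LocallyMultiplicative A)
    (hsm : ∀ (r : ℝ) (S : Set A), IsBounded S → IsBounded (r • S)) (U : Set A) :
    IsBounded U ↔ ∃ (T : SmallMulDisk A) (C : ℝ),
      U ⊆ {x | x ∈ T.subalgebra ∧ gauge T.carrier x ≤ C} := by
  refine ⟨fun hU => ?_, fun ⟨T, C, hsub⟩ => ?_⟩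
  · obtain ⟨T, l, hl, hsub⟩ := h.exists_subset_smul hU
    exact ⟨T, l, fun x hx => ⟨⟨l, hl, hsub hx⟩, gauge_le_of_mem hl.le (hsub hx)⟩⟩
  · refine (hsm (|C| + 1) T.carrier T.isBounded).subset fun x hx => ?_
    exact T.balanced.mem_smul_of_gauge_lt (hsub hx).1
      ((hsub hx).2.trans_lt (by linarith [le_abs_self C]))

end SmallMulDisk

theorem LocallyMultiplicative.isDirectLimitOfNormedAlgebras {A : Type} [NonUnitalRing A]
    [Module ℝ A] [IsScalarTower ℝ A A] [SMulCommClass ℝ A A] [Bornology A]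
    (h : LocallyMultiplicative A) (hsep : SeparatedBorn A)
    (hsm : ∀ (r : ℝ) (S : Set A), IsBounded S → IsBounded (r • S)) :
    IsDirectLimitOfNormedAlgebras A := by
  obtain ⟨T₀, -⟩ := SmallMulDisk.exists_mem_subalgebra h 0
  exact ⟨SmallMulDisk A, (· ≤ ·), ⟨T₀⟩, le_refl, fun _ _ _ => le_trans,
    SmallMulDisk.exists_ge_ge h, SmallMulDisk.subalgebra, fun T => gauge T.carrier,
    fun _ _ => SmallMulDisk.subalgebra_mono, SmallMulDisk.exists_mem_subalgebra h,
    fun _ _ _ => gauge_nonneg _,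
    fun _ _ hx => SmallMulDisk.gauge_eq_zero_iff hsep hx,
    fun T _ hx _ hy => gauge_add_le_of_mem_smul T.convex hx hy,
    fun T r x _ => (gauge_smul T.balanced r x).trans (by rw [Real.norm_eq_abs]),
    fun T _ hx _ hy => gauge_mul_le_of_mul_subset T.balanced T.mul_subset hx hy,
    fun T _ ⟨l, hl, hsub⟩ => ⟨l, hl, fun _ hx => T.balanced.gauge_le_mul_of_subset_smul hl.le hsub hx⟩,
    SmallMulDisk.isBounded_iff h hsm⟩

section UnitBall

variable {A : Type} [NonUnitalRing A] [Module ℝ A] {S : NonUnitalSubalgebra ℝ A} {ν : A → ℝ}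

theorem isDisk_setOf_le_one (hnn : ∀ x ∈ S, 0 ≤ ν x)
    (hadd : ∀ x ∈ S, ∀ y ∈ S, ν (x + y) ≤ ν x + ν y)
    (hsmul : ∀ (r : ℝ), ∀ x ∈ S, ν (r • x) = |r| * ν x) : IsDisk {x | x ∈ S ∧ ν x ≤ 1} := by
  refine ⟨?_, ?_⟩
  · rintro r hr _ ⟨x, ⟨hxS, hx⟩, rfl⟩
    refine ⟨SMulMemClass.smul_mem r hxS, ?_⟩
    rw [hsmul r x hxS]
    exact mul_le_one₀ hr (hnn x hxS) hx
  · rintro x ⟨hxS, hx⟩ y ⟨hyS, hy⟩ a b ha hb hab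
    have haxS : a • x ∈ S := SMulMemClass.smul_mem a hxS
    have hbyS : b • y ∈ S := SMulMemClass.smul_mem b hyS
    refine ⟨add_mem haxS hbyS, ?_⟩
    calc ν (a • x + b • y) ≤ ν (a • x) + ν (b • y) := hadd _ haxS _ hbyS
      _ = a * ν x + b * ν y := by
        rw [hsmul a x hxS, hsmul b y hyS, abs_of_nonneg ha, abs_of_nonneg hb]
      _ ≤ a * 1 + b * 1 := by gcongr
      _ = 1 := by rw [mul_one, mul_one, hab]

theorem setOf_le_one_mul_subset (hnn : ∀ x ∈ S, 0 ≤ ν x)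
    (hmul : ∀ x ∈ S, ∀ y ∈ S, ν (x * y) ≤ ν x * ν y) :
    {x | x ∈ S ∧ ν x ≤ 1} * {x | x ∈ S ∧ ν x ≤ 1} ⊆ {x | x ∈ S ∧ ν x ≤ 1} := by
  rintro _ ⟨x, ⟨hxS, hx⟩, y, ⟨hyS, hy⟩, rfl⟩
  exact ⟨mul_mem hxS hyS, (hmul x hxS y hyS).trans (mul_le_one₀ hx (hnn y hyS) hy)⟩

theorem setOf_le_subset_smul_setOf_le_one (hsmul : ∀ (r : ℝ), ∀ x ∈ S, ν (r • x) = |r| * ν x)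
    {C l : ℝ} (hl : 0 < l) (hCl : C ≤ l) :
    {x | x ∈ S ∧ ν x ≤ C} ⊆ l • {x | x ∈ S ∧ ν x ≤ 1} := by
  rintro x ⟨hxS, hx⟩
  refine ⟨l⁻¹ • x, ⟨SMulMemClass.smul_mem _ hxS, ?_⟩, smul_inv_smul₀ hl.ne' x⟩
  rw [hsmul _ x hxS, abs_of_pos (inv_pos.2 hl), inv_mul_le_one₀ hl]
  exact hx.trans hCl

end UnitBall

theorem IsDirectLimitOfNormedAlgebras.locallyMultiplicative {A : Type} [NonUnitalRing A]
    [Module ℝ A] [IsScalarTower ℝ A A] [SMulCommClass ℝ A A] [Bornology A]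
    (h : IsDirectLimitOfNormedAlgebras A) : LocallyMultiplicative A := by
  obtain ⟨ι, -, -, -, -, -, Sa, ν, -, -, hnn, -, hadd, hsmul, hmul, -, hborn⟩ := h
  intro S hS
  obtain ⟨i, C, hSC⟩ := (hborn S).1 hS
  exact ⟨max C 1, _, by positivity, (hborn _).2 ⟨i, 1, subset_rfl⟩,
    isDisk_setOf_le_one (hnn i) (hadd i) (hsmul i), setOf_le_one_mul_subset (hnn i) (hmul i),
    hSC.trans (setOf_le_subset_smul_setOf_le_one (hsmul i) (by positivity) (le_max_left C 1))⟩

theorem stmt4_general {A : Type} [NonUnitalRing A] [Module ℝ A]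
    [IsScalarTower ℝ A A] [SMulCommClass ℝ A A] [Bornology A]
    (hsep : SeparatedBorn A)
    (hsm : ∀ (r : ℝ) (S : Set A), IsBounded S → IsBounded (r • S)) :
    LocallyMultiplicative A ↔ IsDirectLimitOfNormedAlgebras A :=
  ⟨fun h => h.isDirectLimitOfNormedAlgebras hsep hsm, fun h => h.locallyMultiplicative⟩

theorem stmt4 {A : Type} [NonUnitalRing A] [Module ℝ A]
    [IsScalarTower ℝ A A] [SMulCommClass ℝ A A] [Bornology A]
    (hsep : SeparatedBorn A)
    (hmul : ∀ S T : Set A, IsBounded S → IsBounded T → IsBounded (S * T))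
    (hsm : ∀ (r : ℝ) (S : Set A), IsBounded S → IsBounded (r • S))
    (hhull : ∀ S : Set A, IsBounded S → IsBounded (convexHull ℝ (balancedHull ℝ S))) :
    LocallyMultiplicative A ↔ IsDirectLimitOfNormedAlgebras A :=
  stmt4_general hsep hsm
end

section
/- If P and Q are paracomplexes over a para-additive category, then the space Hom(P,Q) of degree-homogeneous morphism families equipped with the differential δ(φ) = ∂_Q ∘ φ − (−1)^{|φ|} φ ∘ ∂_P is an ordinary chain complex, i.e., δ² = 0. -/
/-!
Expanding `δ²` leaves `φ ≫ ∂_Q² - ∂_P² ≫ φ` in each component. Since `∂² = 1 - T` on both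
paracomplexes and `T` is natural, this is `φ ≫ (1 - T) - (1 - T) ≫ φ = T ≫ φ - φ ≫ T = 0`.
-/

open CategoryTheory

variable {C : Type*} [Category C] [Preadditive C]

/-- The component of a natural transformation of the identity functor at an object. -/
def TApp (T : 𝟭 C ≅ 𝟭 C) (X : C) : X ⟶ X := T.hom.app X

/-- A paracomplex over a para-additive category `(C, T)`. -/
structure Paracomplex (C : Type*) [Category C] [Preadditive C] (T : 𝟭 C ≅ 𝟭 C) where
  X0 : C
  X1 : C
  d0 : X0 ⟶ X1
  d1 : X1 ⟶ X0
  sq0 : d0 ≫ d1 = 𝟙 X0 - TApp T X0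
  sq1 : d1 ≫ d0 = 𝟙 X1 - TApp T X1

open Preadditive

theorem comp_one_sub_TApp (T : 𝟭 C ≅ 𝟭 C) {X Y : C} (f : X ⟶ Y) :
    f ≫ (𝟙 Y - TApp T Y) = (𝟙 X - TApp T X) ≫ f := by
  have naturality : f ≫ TApp T Y = TApp T X ≫ f := T.hom.naturality f
  rw [comp_sub, sub_comp, naturality, Category.comp_id, Category.id_comp]

theorem even_differential_sq {X X' Y Y' : C} (a : X ⟶ X') (b : X' ⟶ X) (c : Y ⟶ Y')
    (e : Y' ⟶ Y) (f : X ⟶ Y) (g : X' ⟶ Y') :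
    (f ≫ c - a ≫ g) ≫ e + a ≫ (g ≫ e - b ≫ f) = f ≫ c ≫ e - (a ≫ b) ≫ f := by
  simp only [sub_comp, comp_sub, Category.assoc]
  abel

theorem odd_differential_sq {X X' Y Y' : C} (a : X ⟶ X') (b : X' ⟶ X) (c : Y ⟶ Y')
    (e : Y' ⟶ Y) (g : X ⟶ Y') (h : X' ⟶ Y) :
    (g ≫ e + a ≫ h) ≫ c - a ≫ (h ≫ c + b ≫ g) = g ≫ e ≫ c - (a ≫ b) ≫ g := by
  simp only [add_comp, comp_add, Category.assoc]
  abel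

/- `δ` on an even element `(f0, f1)` of `Hom(P,Q)` has components
`f0 ≫ Q.d0 - P.d0 ≫ f1 : P.X0 ⟶ Q.X1` and `f1 ≫ Q.d1 - P.d1 ≫ f0 : P.X1 ⟶ Q.X0`;
on an odd element `(g0 : P.X0 ⟶ Q.X1, g1 : P.X1 ⟶ Q.X0)` it has components
`g0 ≫ Q.d1 + P.d0 ≫ g1 : P.X0 ⟶ Q.X0` and `g1 ≫ Q.d0 + P.d1 ≫ g0 : P.X1 ⟶ Q.X1`. -/
theorem stmt7 (T : 𝟭 C ≅ 𝟭 C) (P Q : Paracomplex C T) :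
    -- δ² = 0 on even elements of Hom(P,Q):
    (∀ (f0 : P.X0 ⟶ Q.X0) (f1 : P.X1 ⟶ Q.X1),
      (f0 ≫ Q.d0 - P.d0 ≫ f1) ≫ Q.d1 + P.d0 ≫ (f1 ≫ Q.d1 - P.d1 ≫ f0) = 0 ∧
      (f1 ≫ Q.d1 - P.d1 ≫ f0) ≫ Q.d0 + P.d1 ≫ (f0 ≫ Q.d0 - P.d0 ≫ f1) = 0) ∧
    -- δ² = 0 on odd elements of Hom(P,Q):
    (∀ (g0 : P.X0 ⟶ Q.X1) (g1 : P.X1 ⟶ Q.X0),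
      (g0 ≫ Q.d1 + P.d0 ≫ g1) ≫ Q.d0 - P.d0 ≫ (g1 ≫ Q.d0 + P.d1 ≫ g0) = 0 ∧
      (g1 ≫ Q.d0 + P.d1 ≫ g0) ≫ Q.d1 - P.d1 ≫ (g0 ≫ Q.d1 + P.d0 ≫ g1) = 0) := by
  refine ⟨fun f0 f1 => ⟨?_, ?_⟩, fun g0 g1 => ⟨?_, ?_⟩⟩
  · rw [even_differential_sq, Q.sq0, P.sq0, comp_one_sub_TApp, sub_self]
  · rw [even_differential_sq, Q.sq1, P.sq1, comp_one_sub_TApp, sub_self]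
  · rw [odd_differential_sq, Q.sq1, P.sq0, comp_one_sub_TApp, sub_self]
  · rw [odd_differential_sq, Q.sq0, P.sq1, comp_one_sub_TApp, sub_self]
end

section
/- Let H be an idempotented algebra and C the category of separated essential H-modules. The direct limit functor is left adjoint to the dissection functor dis: for every inductive system (M_j)_{j∈J} of primitive H-modules and every essential H-module N, there is a natural isomorphism Hom_C(colim (M_j), N) ≅ Hom_{ind}((M_j), dis(N)). Moreover colim ∘ dis is naturally equivalent to the identity and dis is fully faithful. -/
/-!
The universal property of the limit identifies bounded maps `Mc → N` with compatible families
of bounded maps `M j → N`, and every such family is already a morphism into `dis N`: a bounded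
`H`-linear map `F` sends the generating disk `S` of a primitive module to a small set whose
disked hull `S'` satisfies `F (H⟨S⟩) ⊆ H⟨S'⟩`, and it sends sets small in `H⟨S⟩` to sets
small in `H⟨S'⟩`. The same construction turns bounded maps `N → N'` into morphisms
`dis N → dis N'`. Conversely such a morphism is bounded, because over an essential module a
small set `S` is fixed by an idempotent `e`, so `S ⊆ e • dhull S` is small in `H⟨dhull S⟩`.
-/

open Bornology Set
open scoped Pointwise

/-- The disked hull. -/
def dhull {V : Type} [AddCommGroup V] [Module ℝ V] (S : Set V) : Set V :=
  convexHull ℝ (balancedHull ℝ S)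

variable (H : Type) [NonUnitalRing H]

/-- An idempotented algebra (with the fine bornology): every finite subset admits a
local unit given by an idempotent. -/
def Idempotented : Prop :=
  ∀ F : Finset H, ∃ e : H, e * e = e ∧ ∀ x ∈ F, e * x = x ∧ x * e = x

/-- A bornological module over `H`: a convex bornological `ℝ`-vector space with a
compatible `H`-module structure; `small` is the bornology. -/
structure BMod : Type 1 where
  M : Type
  [grp : AddCommGroup M]
  [mod : Module ℝ M]
  hsmul : H → M → M
  hsmul_add : ∀ h m n, hsmul h (m + n) = hsmul h m + hsmul h n
  hsmul_addl : ∀ h g m, hsmul (h + g) m = hsmul h m + hsmul g m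
  hsmul_mul : ∀ h g m, hsmul (h * g) m = hsmul h (hsmul g m)
  hsmul_real : ∀ (r : ℝ) h m, hsmul h (r • m) = r • hsmul h m
  small : Set M → Prop
  small_mono : ∀ S T : Set M, T ⊆ S → small S → small T
  small_union : ∀ S T : Set M, small S → small T → small (S ∪ T)
  small_sing : ∀ m, small {m}
  small_smul : ∀ (r : ℝ) (S : Set M), small S → small (r • S)
  small_hull : ∀ S : Set M, small S → small (dhull S)
  small_hsmul : ∀ (h : H) (S : Set M), small S → small (hsmul h '' S)

attribute [instance] BMod.grp BMod.mod

variable {H}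

/-- A morphism of bornological `H`-modules: a bounded `ℝ`-linear `H`-linear map. -/
structure BHom (X Y : BMod H) where
  f : X.M →ₗ[ℝ] Y.M
  map_h : ∀ h m, f (X.hsmul h m) = Y.hsmul h (f m)
  bdd : ∀ S : Set X.M, X.small S → Y.small (⇑f '' S)

/-- Separatedness. -/
def SeparatedM (X : BMod H) : Prop :=
  ∀ W : Submodule ℝ X.M, X.small (W : Set X.M) → W = ⊥

/-- Essentiality: over an idempotented algebra, every small set admits an idempotent
local unit (`H ⊗_H X ≅ X`). -/
def EssentialM (X : BMod H) : Prop :=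
  ∀ S : Set X.M, X.small S → ∃ e : H, e * e = e ∧ ∀ m ∈ S, X.hsmul e m = m

/-- The submodule `H⟨S⟩` generated by `S` (the image of `H ⊗ ⟨S⟩`). -/
def genSub (X : BMod H) (S : Set X.M) : Submodule ℝ X.M :=
  Submodule.span ℝ {m | ∃ h : H, ∃ x ∈ S, m = X.hsmul h x}

/-- `U` is small for the quotient bornology of `H⟨S⟩` (with `H` carrying the fine
bornology and `⟨S⟩` the normed space of the disk `S`). -/
def SubSmall (X : BMod H) (S : Set X.M) (U : Set X.M) : Prop :=
  ∃ (F : Finset H) (c : ℝ), 0 < c ∧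
    U ⊆ dhull {m | ∃ h ∈ F, ∃ x ∈ S, m = c • X.hsmul h x}

/-- A primitive module: one generated, as a bornological `H`-module, by a single small
disk, i.e. some canonical map `H⟨S⟩ → X` is a bornological isomorphism. -/
def PrimitiveM (X : BMod H) : Prop :=
  ∃ S : Set X.M, X.small S ∧ Balanced ℝ S ∧ Convex ℝ S ∧ genSub X S = ⊤ ∧
    ∀ U : Set X.M, X.small U → SubSmall X S U

section Disks

variable {𝕜 V W : Type*} [NormedField 𝕜] [PartialOrder 𝕜] [AddCommGroup V] [Module 𝕜 V]
  [AddCommGroup W] [Module 𝕜 W]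

theorem LinearMap.image_absConvexHull_subset (g : V →ₗ[𝕜] W) (S : Set V) :
    g '' absConvexHull 𝕜 S ⊆ absConvexHull 𝕜 (g '' S) := by
  refine image_subset_iff.2 (absConvexHull_min (image_subset_iff.1 subset_absConvexHull) ⟨?_, ?_⟩)
  · exact balanced_absConvexHull.mulActionHom_preimage g.toMulActionHom
  · exact convex_absConvexHull.linear_preimage g

end Disks

section Dhull

variable {V W : Type} [AddCommGroup V] [Module ℝ V] [AddCommGroup W] [Module ℝ W]

theorem dhull_eq_absConvexHull (S : Set V) : dhull S = absConvexHull ℝ S :=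
  (absConvexHull_eq_convexHull_balancedHull ℝ).symm

theorem subset_dhull (S : Set V) : S ⊆ dhull S :=
  (dhull_eq_absConvexHull S).symm ▸ subset_absConvexHull

theorem balanced_dhull (S : Set V) : Balanced ℝ (dhull S) :=
  (dhull_eq_absConvexHull S).symm ▸ balanced_absConvexHull

theorem convex_dhull (S : Set V) : Convex ℝ (dhull S) :=
  (dhull_eq_absConvexHull S).symm ▸ convex_absConvexHull

theorem dhull_mono {S T : Set V} (h : S ⊆ T) : dhull S ⊆ dhull T := by
  simpa only [dhull_eq_absConvexHull] using absConvexHull_mono h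

theorem LinearMap.image_dhull_subset (g : V →ₗ[ℝ] W) (S : Set V) :
    g '' dhull S ⊆ dhull (g '' S) := by
  simpa only [dhull_eq_absConvexHull] using g.image_absConvexHull_subset S

end Dhull

section Modules

variable {X Y Z : BMod H}

theorem BHom.ext {F G : BHom X Y} (h : F.f = G.f) : F = G := by
  cases F; cases G; cases h; rfl

def BHom.comp (G : BHom Y Z) (F : BHom X Y) : BHom X Z where
  f := G.f.comp F.f
  map_h h m := by simp only [LinearMap.comp_apply, F.map_h, G.map_h]
  bdd S hS := by
    rw [LinearMap.coe_comp, image_comp]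
    exact G.bdd _ (F.bdd S hS)

theorem BMod.small_biUnion_hsmul (X : BMod H) (F : Finset H) {S : Set X.M} (hS : X.small S) :
    X.small (⋃ h ∈ F, X.hsmul h '' S) := by
  classical
  induction F using Finset.induction_on with
  | empty => exact X.small_mono {0} _ (by simp) (X.small_sing 0)
  | insert h F _ ih =>
    rw [Finset.set_biUnion_insert]
    exact X.small_union _ _ (X.small_hsmul h S hS) ih

theorem SubSmall.small {S U : Set X.M} (hS : X.small S) (hU : SubSmall X S U) : X.small U := by
  obtain ⟨F, c, -, hUsub⟩ := hU
  refine X.small_mono _ _ hUsub (X.small_hull _ (X.small_mono _ _ ?_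
    (X.small_smul c _ (X.small_biUnion_hsmul F hS))))
  rintro _ ⟨h, hF, x, hx, rfl⟩
  exact smul_mem_smul_set (mem_biUnion hF (mem_image_of_mem _ hx))

theorem genSub_map_le (g : X.M →ₗ[ℝ] Y.M) (hg : ∀ h m, g (X.hsmul h m) = Y.hsmul h (g m))
    {S : Set X.M} {S' : Set Y.M} (hS : g '' S ⊆ S') : (genSub X S).map g ≤ genSub Y S' := by
  rw [genSub, Submodule.map_span, Submodule.span_le]
  rintro _ ⟨_, ⟨h, x, hx, rfl⟩, rfl⟩
  exact Submodule.subset_span ⟨h, g x, hS (mem_image_of_mem g hx), hg h x⟩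

theorem SubSmall.image (g : X.M →ₗ[ℝ] Y.M) (hg : ∀ h m, g (X.hsmul h m) = Y.hsmul h (g m))
    {S : Set X.M} {S' : Set Y.M} (hS : g '' S ⊆ S') {U : Set X.M} (hU : SubSmall X S U) :
    SubSmall Y S' (g '' U) := by
  obtain ⟨F, c, hc, hUsub⟩ := hU
  refine ⟨F, c, hc, (image_mono hUsub).trans ((g.image_dhull_subset _).trans (dhull_mono ?_))⟩
  rintro _ ⟨_, ⟨h, hF, x, hx, rfl⟩, rfl⟩
  exact ⟨h, hF, g x, hS (mem_image_of_mem g hx), by rw [g.map_smul, hg]⟩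

theorem subSmall_dhull_self (hX : EssentialM X) {S : Set X.M} (hS : X.small S) :
    SubSmall X (dhull S) S := by
  obtain ⟨e, -, he⟩ := hX (dhull S) (X.small_hull S hS)
  refine ⟨{e}, 1, one_pos, fun s hs => subset_dhull _ ?_⟩
  exact ⟨e, Finset.mem_singleton_self e, s, subset_dhull S hs,
    by rw [one_smul, he s (subset_dhull S hs)]⟩

theorem BHom.exists_disk_image (F : BHom X Y) {S : Set X.M} (hS : X.small S) :
    ∃ S' : Set Y.M, Y.small S' ∧ Balanced ℝ S' ∧ Convex ℝ S' ∧
      (∀ m ∈ genSub X S, F.f m ∈ genSub Y S') ∧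
      ∀ U : Set X.M, SubSmall X S U → SubSmall Y S' (F.f '' U) :=
  ⟨dhull (F.f '' S), Y.small_hull _ (F.bdd S hS), balanced_dhull _, convex_dhull _,
    fun _ hm => genSub_map_le F.f F.map_h (subset_dhull _) (Submodule.mem_map_of_mem hm),
    fun _ => SubSmall.image F.f F.map_h (subset_dhull _)⟩

theorem BHom.exists_disk_image_of_primitive (hX : PrimitiveM X) (F : BHom X Y) :
    ∃ S' : Set Y.M, Y.small S' ∧ Balanced ℝ S' ∧ Convex ℝ S' ∧
      (∀ m, F.f m ∈ genSub Y S') ∧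
      ∀ U : Set X.M, X.small U → SubSmall Y S' (F.f '' U) := by
  obtain ⟨S, hS, -, -, hgen, hsmall⟩ := hX
  obtain ⟨S', hS', hbal, hconv, hmem, himage⟩ := F.exists_disk_image hS
  exact ⟨S', hS', hbal, hconv, fun m => hmem m (hgen ▸ Submodule.mem_top),
    fun U hU => himage U (hsmall U hU)⟩

theorem bdd_of_subSmall_image (hX : EssentialM X) (g : X.M →ₗ[ℝ] Y.M)
    (hg : ∀ S : Set X.M, X.small S → Balanced ℝ S → Convex ℝ S →
      ∃ S' : Set Y.M, Y.small S' ∧ ∀ U : Set X.M, SubSmall X S U → SubSmall Y S' (g '' U))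
    (S : Set X.M) (hS : X.small S) : Y.small (g '' S) := by
  obtain ⟨S', hS', himage⟩ :=
    hg (dhull S) (X.small_hull S hS) (balanced_dhull S) (convex_dhull S)
  exact (himage S (subSmall_dhull_self hX hS)).small hS'

end Modules

section Colimit

variable {J : Type} [Preorder J] {M : J → BMod H}
  (ψ : ∀ {j k : J}, j ≤ k → BHom (M j) (M k)) {Mc N : BMod H} (u : ∀ j, BHom (M j) Mc)

noncomputable def homEquivCompatible
    (hu : ∀ {j k : J} (h : j ≤ k) (m : (M j).M), (u k).f ((ψ h).f m) = (u j).f m)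
    (huniv : ∀ f : ∀ j, BHom (M j) N,
      (∀ {j k : J} (h : j ≤ k) (m : (M j).M), (f k).f ((ψ h).f m) = (f j).f m) →
      ∃! F : BHom Mc N, ∀ j m, F.f ((u j).f m) = (f j).f m) :
    BHom Mc N ≃ {f : ∀ j, BHom (M j) N //
      ∀ {j k : J} (h : j ≤ k) (m : (M j).M), (f k).f ((ψ h).f m) = (f j).f m} where
  toFun F := ⟨fun j => F.comp (u j), fun h m => congrArg F.f (hu h m)⟩
  invFun f := (huniv f.1 f.2).exists.choose
  left_inv F := by
    have hF := huniv (fun j => F.comp (u j)) fun h m => congrArg F.f (hu h m)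
    exact hF.unique hF.exists.choose_spec fun _ _ => rfl
  right_inv f := Subtype.ext <| funext fun j =>
    BHom.ext <| LinearMap.ext <| (huniv f.1 f.2).exists.choose_spec j

noncomputable def homEquivDisOfPrimitive (hM : ∀ j, PrimitiveM (M j))
    (hu : ∀ {j k : J} (h : j ≤ k) (m : (M j).M), (u k).f ((ψ h).f m) = (u j).f m)
    (huniv : ∀ f : ∀ j, BHom (M j) N,
      (∀ {j k : J} (h : j ≤ k) (m : (M j).M), (f k).f ((ψ h).f m) = (f j).f m) →
      ∃! F : BHom Mc N, ∀ j m, F.f ((u j).f m) = (f j).f m) :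
    BHom Mc N ≃ {f : ∀ j, BHom (M j) N //
      (∀ {j k : J} (h : j ≤ k) (m : (M j).M), (f k).f ((ψ h).f m) = (f j).f m) ∧
      ∀ j, ∃ S : Set N.M, N.small S ∧ Balanced ℝ S ∧ Convex ℝ S ∧
        (∀ m, (f j).f m ∈ genSub N S) ∧
        ∀ U : Set (M j).M, (M j).small U → SubSmall N S ((f j).f '' U)} :=
  (homEquivCompatible ψ u hu huniv).trans <| Equiv.subtypeEquivRight fun f =>
    ⟨fun hf => ⟨hf, fun j => (f j).exists_disk_image_of_primitive (hM j)⟩, And.left⟩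

end Colimit

def BHom.equivDisHom {N N' : BMod H} (hN : EssentialM N) :
    BHom N N' ≃ {g : N.M →ₗ[ℝ] N'.M //
      (∀ h m, g (N.hsmul h m) = N'.hsmul h (g m)) ∧
      ∀ S : Set N.M, N.small S → Balanced ℝ S → Convex ℝ S →
        ∃ S' : Set N'.M, N'.small S' ∧ Balanced ℝ S' ∧ Convex ℝ S' ∧
          (∀ m ∈ genSub N S, g m ∈ genSub N' S') ∧
          ∀ U : Set N.M, SubSmall N S U → SubSmall N' S' (⇑g '' U)} where
  toFun F := ⟨F.f, F.map_h, fun _ hS _ _ => F.exists_disk_image hS⟩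
  invFun g := ⟨g.1, g.2.1, bdd_of_subSmall_image hN g.1 fun S hS hbal hconv => by
    obtain ⟨S', hS', -, -, -, himage⟩ := g.2.2 S hS hbal hconv
    exact ⟨S', hS', himage⟩⟩
  left_inv _ := rfl
  right_inv _ := rfl

theorem stmt8_general {H : Type} [NonUnitalRing H]
    -- an inductive system of primitive (separated, essential) modules over a
    -- directed index set J
    (J : Type) [Preorder J]
    (M : J → BMod H)
    (ψ : ∀ {j k : J}, j ≤ k → BHom (M j) (M k))
    (hMprim : ∀ j, PrimitiveM (M j))
    -- `Mc` is the separated inductive limit of the system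
    (Mc : BMod H)
    (u : ∀ j, BHom (M j) Mc)
    (hu : ∀ {j k : J} (h : j ≤ k) (m : (M j).M), (u k).f ((ψ h).f m) = (u j).f m)
    (huniv : ∀ (N : BMod H), SeparatedM N → EssentialM N →
      ∀ f : ∀ j, BHom (M j) N,
        (∀ {j k : J} (h : j ≤ k) (m : (M j).M), (f k).f ((ψ h).f m) = (f j).f m) →
        ∃! F : BHom Mc N, ∀ j m, F.f ((u j).f m) = (f j).f m) :
    -- (i)  Hom_C(colim M, N) ≅ Hom_ind((M_j), dis N):  bounded module maps from the
    -- limit correspond to compatible families which factor boundedly through the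
    -- submodules `H⟨S⟩` of the dissection of `N`;
    (∀ (N : BMod H), SeparatedM N → EssentialM N →
      ∃ e : BHom Mc N ≃
        {f : ∀ j, BHom (M j) N //
          (∀ {j k : J} (h : j ≤ k) (m : (M j).M), (f k).f ((ψ h).f m) = (f j).f m) ∧
          ∀ j, ∃ S : Set N.M, N.small S ∧ Balanced ℝ S ∧ Convex ℝ S ∧
            (∀ m, (f j).f m ∈ genSub N S) ∧
            ∀ U : Set (M j).M, (M j).small U → SubSmall N S ((f j).f '' U)},
        ∀ (F : BHom Mc N) (j : J) (m : (M j).M),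
          ((e F).1 j).f m = F.f ((u j).f m)) ∧
    -- (ii)  `colim ∘ dis ≅ id` and `dis` is fully faithful:  morphisms of inductive
    -- systems `dis N → dis N'` correspond exactly to bounded `H`-module maps `N → N'`.
    (∀ (N N' : BMod H), SeparatedM N → EssentialM N → SeparatedM N' → EssentialM N' →
      ∃ e' : BHom N N' ≃
        {g : N.M →ₗ[ℝ] N'.M //
          (∀ h m, g (N.hsmul h m) = N'.hsmul h (g m)) ∧
          ∀ S : Set N.M, N.small S → Balanced ℝ S → Convex ℝ S →
            ∃ S' : Set N'.M, N'.small S' ∧ Balanced ℝ S' ∧ Convex ℝ S' ∧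
              (∀ m ∈ genSub N S, g m ∈ genSub N' S') ∧
              ∀ U : Set N.M, SubSmall N S U → SubSmall N' S' (⇑g '' U)},
        ∀ (F : BHom N N') (m : N.M), ((e' F : _) : N.M →ₗ[ℝ] N'.M) m = F.f m) :=
  ⟨fun N hNsep hNess => ⟨homEquivDisOfPrimitive ψ u hMprim hu (huniv N hNsep hNess),
      fun _ _ _ => rfl⟩,
    fun _ _ _ hNess _ _ => ⟨BHom.equivDisHom hNess, fun _ _ => rfl⟩⟩

theorem stmt8 {H : Type} [NonUnitalRing H]
    (hH : Idempotented H)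
    -- an inductive system of primitive (separated, essential) modules over a
    -- directed index set J
    (J : Type) [Preorder J] [IsDirected J (· ≤ ·)]
    (M : J → BMod H)
    (ψ : ∀ {j k : J}, j ≤ k → BHom (M j) (M k))
    (hψ_id : ∀ (j : J) (m : (M j).M), (ψ (le_refl j)).f m = m)
    (hψ_comp : ∀ {i j k : J} (hij : i ≤ j) (hjk : j ≤ k) (m : (M i).M),
      (ψ hjk).f ((ψ hij).f m) = (ψ (hij.trans hjk)).f m)
    (hMprim : ∀ j, PrimitiveM (M j))
    (hMsep : ∀ j, SeparatedM (M j)) (hMess : ∀ j, EssentialM (M j))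
    -- `Mc` is the separated inductive limit of the system
    (Mc : BMod H) (hMcsep : SeparatedM Mc) (hMcess : EssentialM Mc)
    (u : ∀ j, BHom (M j) Mc)
    (hu : ∀ {j k : J} (h : j ≤ k) (m : (M j).M), (u k).f ((ψ h).f m) = (u j).f m)
    (huniv : ∀ (N : BMod H), SeparatedM N → EssentialM N →
      ∀ f : ∀ j, BHom (M j) N,
        (∀ {j k : J} (h : j ≤ k) (m : (M j).M), (f k).f ((ψ h).f m) = (f j).f m) →
        ∃! F : BHom Mc N, ∀ j m, F.f ((u j).f m) = (f j).f m) :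
    -- (i)  Hom_C(colim M, N) ≅ Hom_ind((M_j), dis N):  bounded module maps from the
    -- limit correspond to compatible families which factor boundedly through the
    -- submodules `H⟨S⟩` of the dissection of `N`;
    (∀ (N : BMod H), SeparatedM N → EssentialM N →
      ∃ e : BHom Mc N ≃
        {f : ∀ j, BHom (M j) N //
          (∀ {j k : J} (h : j ≤ k) (m : (M j).M), (f k).f ((ψ h).f m) = (f j).f m) ∧
          ∀ j, ∃ S : Set N.M, N.small S ∧ Balanced ℝ S ∧ Convex ℝ S ∧
            (∀ m, (f j).f m ∈ genSub N S) ∧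
            ∀ U : Set (M j).M, (M j).small U → SubSmall N S ((f j).f '' U)},
        ∀ (F : BHom Mc N) (j : J) (m : (M j).M),
          ((e F).1 j).f m = F.f ((u j).f m)) ∧
    -- (ii)  `colim ∘ dis ≅ id` and `dis` is fully faithful:  morphisms of inductive
    -- systems `dis N → dis N'` correspond exactly to bounded `H`-module maps `N → N'`.
    (∀ (N N' : BMod H), SeparatedM N → EssentialM N → SeparatedM N' → EssentialM N' →
      ∃ e' : BHom N N' ≃
        {g : N.M →ₗ[ℝ] N'.M //
          (∀ h m, g (N.hsmul h m) = N'.hsmul h (g m)) ∧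
          ∀ S : Set N.M, N.small S → Balanced ℝ S → Convex ℝ S →
            ∃ S' : Set N'.M, N'.small S' ∧ Balanced ℝ S' ∧ Convex ℝ S' ∧
              (∀ m ∈ genSub N S, g m ∈ genSub N' S') ∧
              ∀ U : Set N.M, SubSmall N S U → SubSmall N' S' (⇑g '' U)},
        ∀ (F : BHom N N') (m : N.M), ((e' F : _) : N.M →ₗ[ℝ] N'.M) m = F.f m) :=
  stmt8_general J M ψ hMprim Mc u hu huniv
end
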